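/- arXiv:2207.02629 — 2 statements merged into one kernel-verified Lean document; each statement's English description precedes it below -/
import Mathlib

section
/- Every binary tree-child phylogenetic network N on an n-taxon set X is displayed in some binary tree-child network N' on X that has exactly n−1 reticulate nodes and all of whose tree components are paths each containing exactly one leaf; moreover N' can be obtained from N by only adding reticulate edges (and subdividing edges). -/
/-- A rooted, leaf-labeled digraph: a candidate phylogenetic network on taxon set `X`. -/
structure Net (V : Type) (X : Type) where
  E : V → V → Prop
  root : V
  leaf : X → V

namespace Net

variable {V X : Type}

/-- Indegree of a vertex. -/
noncomputable def inDeg (N : Net V X) (v : V) : ℕ := {u | N.E u v}.ncard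

/-- Outdegree of a vertex. -/
noncomputable def outDeg (N : Net V X) (v : V) : ℕ := {w | N.E v w}.ncard

def IsLeaf (N : Net V X) (v : V) : Prop := N.outDeg v = 0

/-- A tree node: indegree at most one. -/
def IsTreeNode (N : Net V X) (v : V) : Prop := N.inDeg v ≤ 1

/-- A reticulate node: indegree two (or more, in the non-binary case: indegree ≥ 2). -/
def IsRet (N : Net V X) (v : V) : Prop := 2 ≤ N.inDeg v

def Acyclic (N : Net V X) : Prop := ∀ v, ¬ Relation.TransGen N.E v v

/-- Common well-formedness conditions of a rooted phylogenetic network: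
acyclic, rooted, every node reachable from the root, leaves bijectively labeled by `X`. -/
structure IsPhylo (N : Net V X) : Prop where
  acyclic : N.Acyclic
  rootIn : N.inDeg N.root = 0
  reach : ∀ v, Relation.ReflTransGen N.E N.root v
  leafInj : Function.Injective N.leaf
  leafIsLeaf : ∀ x, N.IsLeaf (N.leaf x)
  leafSurj : ∀ v, N.IsLeaf v → ∃ x, N.leaf x = v
  leafIn : ∀ x, N.inDeg (N.leaf x) = 1

/-- A binary phylogenetic network: every non-leaf node is either a tree node
(indegree ≤ 1, outdegree 2) or a reticulate node (indegree 2, outdegree 1). -/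
structure IsBinaryNet (N : Net V X) extends IsPhylo N : Prop where
  deg : ∀ v, ¬ N.IsLeaf v →
    (N.inDeg v ≤ 1 ∧ N.outDeg v = 2) ∨ (N.inDeg v = 2 ∧ N.outDeg v = 1)

/-- Tree-child property: every non-leaf node has a child that is a tree node. -/
def TreeChild (N : Net V X) : Prop :=
  ∀ v, ¬ N.IsLeaf v → ∃ w, N.E v w ∧ N.IsTreeNode w

/-- A binary phylogenetic tree: a binary phylogenetic network without reticulate nodes. -/
def IsBinaryTree (N : Net V X) : Prop := N.IsBinaryNet ∧ ∀ v, N.inDeg v ≤ 1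

/-- A tree edge: an edge entering a tree node. -/
def TreeEdge (N : Net V X) (u v : V) : Prop := N.E u v ∧ N.IsTreeNode v

/-- The tree component rooted at `x`: all nodes reachable from `x` via tree edges. -/
def comp (N : Net V X) (x : V) : Set V := {v | Relation.ReflTransGen N.TreeEdge x v}

/-- `u` and `v` lie in a common tree component. -/
def InSameComp (N : Net V X) (u v : V) : Prop :=
  ∃ x, (x = N.root ∨ N.IsRet x) ∧ u ∈ N.comp x ∧ v ∈ N.comp x

/-- The taxa `x` and `y` form a cherry: their leaves share a common parent. -/
def HasCherry (N : Net V X) (x y : X) : Prop :=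
  x ≠ y ∧ ∃ p, N.E p (N.leaf x) ∧ N.E p (N.leaf y)

/-- The set of cherries of a tree, as unordered pairs of taxa. -/
def cherries (N : Net V X) : Set (Sym2 X) :=
  {p | ∃ x y, p = s(x, y) ∧ N.HasCherry x y}

/-- The tree has the 3-subtree `((a,b),c)`: a node whose two children are the leaf `c`
and the parent of the cherry `(a,b)`. -/
def Has3Subtree (N : Net V X) (a b c : X) : Prop :=
  a ≠ b ∧ a ≠ c ∧ b ≠ c ∧
  ∃ v p, N.E v p ∧ N.E v (N.leaf c) ∧ N.E p (N.leaf a) ∧ N.E p (N.leaf b)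

def IsAncestor (N : Net V X) (u v : V) : Prop := Relation.ReflTransGen N.E u v

/-- `l` is the least common ancestor of `u` and `v`. -/
def IsLCA (N : Net V X) (l u v : V) : Prop :=
  N.IsAncestor l u ∧ N.IsAncestor l v ∧
  ∀ w, N.IsAncestor w u → N.IsAncestor w v → N.IsAncestor w l

end Net

/-- Paths in `S` from `a` to `b` whose vertices other than `a` and `b` avoid the set `A`. -/
def pathAvoid {V : Type} (S : V → V → Prop) (A : Set V) (a b : V) : Prop :=
  Relation.ReflTransGen (fun u v => S u v ∧ (v = b ∨ v ∉ A)) a b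

/-- `T` is displayed in `N`: `N` contains a subdivision of `T` preserving the leaf labels,
i.e. `T` is obtained from `N` by deleting all but one incoming edge at each reticulate node,
pruning nodes without labeled leaf descendants, and suppressing degree-two nodes. -/
def Display {VT V X : Type} (T : Net VT X) (N : Net V X) : Prop :=
  ∃ (S : V → V → Prop) (φ : VT → V),
    (∀ u v, S u v → N.E u v) ∧
    Function.Injective φ ∧
    (∀ x, φ (T.leaf x) = N.leaf x) ∧
    (∀ a b, T.E a b → pathAvoid S (Set.range φ) (φ a) (φ b)) ∧
    (∀ a : VT, {w | S (φ a) w}.ncard = T.outDeg a ∧ {u | S u (φ a)}.ncard = T.inDeg a) ∧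
    (∀ v : V, v ∉ Set.range φ → ((∃ u, S u v) ∨ (∃ w, S v w)) →
      {w | S v w}.ncard = 1 ∧ {u | S u v}.ncard = 1)

/-- `N` displays the cherry `(x, y)`: some binary tree displayed in `N` has `(x,y)` as a cherry. -/
def DisplaysCherry {V X : Type} (N : Net V X) (x y : X) : Prop :=
  ∃ (VT : Type) (T : Net VT X),
    Finite VT ∧ T.IsBinaryTree ∧ Display T N ∧ T.HasCherry x y

/-- `N` displays the 3-subtree `((a,b),c)`. -/
def Displays3Subtree {V X : Type} (N : Net V X) (a b c : X) : Prop :=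
  ∃ (VT : Type) (T : Net VT X),
    Finite VT ∧ T.IsBinaryTree ∧ Display T N ∧ T.Has3Subtree a b c

/-- Isomorphism of leaf-labeled rooted digraphs. -/
def NetIso {V1 V2 X : Type} (N1 : Net V1 X) (N2 : Net V2 X) : Prop :=
  ∃ f : V1 ≃ V2, (∀ u v, N1.E u v ↔ N2.E (f u) (f v)) ∧
    f N1.root = N2.root ∧ ∀ x, f (N1.leaf x) = N2.leaf x

/-!
If a node `t` of a binary tree-child network has two tree children `c₀, c₁`, subdivide the
edges `t → cᵢ` by new nodes `rᵢ` and add the reticulate edge `r₀ → r₁`. The result is again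
binary and tree-child, has one more reticulate node, and displays every tree the old network
displays, since an embedding may simply route through the subdivision nodes. In a tree-child
network every tree component contains a leaf, so the component roots (the root and the reticulate
nodes) inject into the taxa and there are at most `n - 1` reticulate nodes; hence the process
stops, at a network in which no node has two tree children. There every tree component is a path
to a single leaf, so leaves and component roots correspond bijectively and exactly `n - 1` nodes
are reticulate.
-/

open Set Relation

theorem Relation.exists_reflTransGen_of_forall_exists {α : Type*} [Finite α]
    {R : α → α → Prop} (hR : ∀ a, ¬ TransGen R a a) {P : α → Prop}
    (h : ∀ a, ¬ P a → ∃ b, R a b) (a : α) : ∃ b, ReflTransGen R a b ∧ P b := by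
  have : IsTrans α (fun x y => TransGen R y x) := ⟨fun _ _ _ hxy hyz => hyz.trans hxy⟩
  have : Std.Irrefl (fun x y => TransGen R y x) := ⟨hR⟩
  induction a using (Finite.wellFounded_of_trans_of_irrefl (fun x y => TransGen R y x)).induction
    with
  | _ a ih =>
    by_cases ha : P a
    · exact ⟨a, .refl, ha⟩
    obtain ⟨b, hab⟩ := h a ha
    obtain ⟨d, hbd, hd⟩ := ih b (.single hab)
    exact ⟨d, .head hab hbd, hd⟩

namespace Net

variable {V X : Type}

def IsCompRoot (N : Net V X) (x : V) : Prop := x = N.root ∨ N.IsRet x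

def AtMostOneTreeChild (N : Net V X) : Prop := ∀ v, {w | N.TreeEdge v w}.Subsingleton

section Basic

variable {N : Net V X}

lemma isTreeNode_of_not_isRet {v : V} (h : ¬ N.IsRet v) : N.IsTreeNode v := by
  unfold IsRet at h; unfold IsTreeNode; omega

lemma not_isTreeNode_of_isRet {v : V} (h : N.IsRet v) : ¬ N.IsTreeNode v := by
  unfold IsRet at h; unfold IsTreeNode; omega

lemma IsPhylo.not_isRet_root (hp : N.IsPhylo) : ¬ N.IsRet N.root := by
  rw [IsRet, hp.rootIn]; omega

lemma IsPhylo.exists_E_of_ne_root (hp : N.IsPhylo) {v : V} (hv : v ≠ N.root) :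
    ∃ u, N.E u v := by
  obtain h | ⟨u, -, hu⟩ := (hp.reach v).cases_tail
  · exact absurd h hv
  · exact ⟨u, hu⟩

variable [Finite V]

lemma not_isLeaf_of_E {v w : V} (h : N.E v w) : ¬ N.IsLeaf v := by
  rw [IsLeaf, outDeg, ncard_eq_zero]
  exact (nonempty_of_mem (show w ∈ {w | N.E v w} from h)).ne_empty

lemma eq_of_E_of_E_of_isTreeNode {u u' v : V} (hv : N.IsTreeNode v) (hu : N.E u v)
    (hu' : N.E u' v) : u = u' :=
  (ncard_le_one (toFinite _)).mp hv u hu u' hu'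

lemma IsPhylo.not_E_root (hp : N.IsPhylo) (u : V) : ¬ N.E u N.root := by
  have h := hp.rootIn
  rw [inDeg, ncard_eq_zero] at h
  exact fun hu => h.subset hu

lemma IsCompRoot.not_treeEdge (hp : N.IsPhylo) {x w : V} (hx : N.IsCompRoot x) :
    ¬ N.TreeEdge w x := by
  rintro ⟨hwx, htree⟩
  obtain rfl | hret := hx
  · exact hp.not_E_root w hwx
  · exact not_isTreeNode_of_isRet hret htree

end Basic

section Components

variable {N : Net V X}

lemma AtMostOneTreeChild.comparable_of_mem_comp (h : N.AtMostOneTreeChild) {x u w : V}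
    (hu : u ∈ N.comp x) (hw : w ∈ N.comp x) :
    ReflTransGen N.TreeEdge u w ∨ ReflTransGen N.TreeEdge w u := by
  induction hw using ReflTransGen.head_induction_on generalizing u with
  | refl => exact Or.inr hu
  | head hxy hyw ih =>
    obtain rfl | ⟨y', hxy', hy'u⟩ := hu.cases_head
    · exact Or.inl (.head hxy hyw)
    · exact ih (h _ hxy' hxy ▸ hy'u)

lemma Acyclic.not_transGen_treeEdge (hac : N.Acyclic) (v : V) : ¬ TransGen N.TreeEdge v v :=
  fun h => hac v (TransGen.mono (fun _ _ => And.left) v v h)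

variable [Finite V]

lemma exists_isLeaf_mem_comp (hac : N.Acyclic) (htc : N.TreeChild) (x : V) :
    ∃ l ∈ N.comp x, N.IsLeaf l :=
  exists_reflTransGen_of_forall_exists hac.not_transGen_treeEdge htc x

lemma IsPhylo.exists_isCompRoot_mem_comp (hp : N.IsPhylo) (v : V) :
    ∃ x, N.IsCompRoot x ∧ v ∈ N.comp x := by
  have hR : ∀ a, ¬ TransGen (Function.swap N.TreeEdge) a a :=
    fun a h => hp.acyclic.not_transGen_treeEdge a (transGen_swap.mp h)
  have hpred : ∀ a, ¬ N.IsCompRoot a → ∃ b, N.TreeEdge b a := by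
    intro a ha
    obtain ⟨b, hb⟩ := hp.exists_E_of_ne_root fun h => ha (Or.inl h)
    exact ⟨b, hb, isTreeNode_of_not_isRet fun h => ha (Or.inr h)⟩
  obtain ⟨x, hvx, hx⟩ := exists_reflTransGen_of_forall_exists hR hpred v
  exact ⟨x, hx, reflTransGen_swap.mp hvx⟩

/-- Walk back from `v` along tree edges: a tree node has a unique parent. -/
lemma IsPhylo.eq_of_mem_comp (hp : N.IsPhylo) {x y v : V} (hx : N.IsCompRoot x)
    (hy : N.IsCompRoot y) (hvx : v ∈ N.comp x) (hvy : v ∈ N.comp y) : x = y := by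
  induction hvx generalizing y with
  | refl =>
    obtain rfl | ⟨w, -, hw⟩ := hvy.cases_tail
    · rfl
    · exact absurd hw (hx.not_treeEdge hp)
  | tail _ hpv ih =>
    obtain rfl | ⟨w, hyw, hwv⟩ := hvy.cases_tail
    · exact absurd hpv (hy.not_treeEdge hp)
    · exact ih hy (eq_of_E_of_E_of_isTreeNode hpv.2 hwv.1 hpv.1 ▸ hyw)

lemma AtMostOneTreeChild.eq_of_isLeaf_mem_comp (h : N.AtMostOneTreeChild) {x l l' : V}
    (hl : l ∈ N.comp x) (hl' : l' ∈ N.comp x) (hleaf : N.IsLeaf l) (hleaf' : N.IsLeaf l') :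
    l = l' := by
  obtain h | h := h.comparable_of_mem_comp hl hl'
  · obtain rfl | ⟨_, hb, -⟩ := h.cases_head
    · rfl
    · exact absurd hleaf (not_isLeaf_of_E hb.1)
  · obtain rfl | ⟨_, hb, -⟩ := h.cases_head
    · rfl
    · exact absurd hleaf' (not_isLeaf_of_E hb.1)

lemma ncard_isLeaf_mem_comp (hac : N.Acyclic) (htc : N.TreeChild) (h : N.AtMostOneTreeChild)
    (x : V) : {v ∈ N.comp x | N.IsLeaf v}.ncard = 1 := by
  obtain ⟨l, hl, hleaf⟩ := exists_isLeaf_mem_comp hac htc x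
  refine ncard_eq_one.mpr ⟨l, Set.ext fun v => ⟨fun ⟨hv, hvleaf⟩ => ?_, ?_⟩⟩
  · exact h.eq_of_isLeaf_mem_comp hv hl hvleaf hleaf
  · rintro rfl; exact ⟨hl, hleaf⟩

end Components

section Counting

variable [Finite V] {N : Net V X}

lemma IsPhylo.ncard_isCompRoot (hp : N.IsPhylo) :
    {x | N.IsCompRoot x}.ncard = {v | N.IsRet v}.ncard + 1 := by
  rw [show {x | N.IsCompRoot x} = insert N.root {v | N.IsRet v} from rfl,
    ncard_insert_of_notMem (show N.root ∉ {v | N.IsRet v} from hp.not_isRet_root)]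

/-- Send each component root to a leaf of its tree component. -/
lemma IsPhylo.ncard_isCompRoot_le (hp : N.IsPhylo) (htc : N.TreeChild) :
    {x | N.IsCompRoot x}.ncard ≤ Nat.card X := by
  have hleaf (x : V) : ∃ a : X, N.leaf a ∈ N.comp x := by
    obtain ⟨l, hl, hleaf⟩ := exists_isLeaf_mem_comp hp.acyclic htc x
    obtain ⟨a, rfl⟩ := hp.leafSurj l hleaf
    exact ⟨a, hl⟩
  choose σ hσ using hleaf
  have : Finite X := Finite.of_injective _ hp.leafInj
  rw [← ncard_univ]
  exact ncard_le_ncard_of_injOn σ (fun _ _ => mem_univ _)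
    fun x hx y hy hxy => hp.eq_of_mem_comp hx hy (hσ x) (hxy ▸ hσ y)

/-- Send each leaf to the root of its tree component. -/
lemma IsPhylo.card_le_ncard_isCompRoot (hp : N.IsPhylo) (h : N.AtMostOneTreeChild) :
    Nat.card X ≤ {x | N.IsCompRoot x}.ncard := by
  choose ρ hρ hleaf using fun a : X => hp.exists_isCompRoot_mem_comp (N.leaf a)
  rw [← ncard_univ]
  exact ncard_le_ncard_of_injOn ρ (fun a _ => hρ a) fun a _ b _ hab =>
    hp.leafInj (h.eq_of_isLeaf_mem_comp (hleaf a) (hab ▸ hleaf b) (hp.leafIsLeaf a)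
      (hp.leafIsLeaf b))

lemma IsPhylo.ncard_isRet_add_one_le (hp : N.IsPhylo) (htc : N.TreeChild) :
    {v | N.IsRet v}.ncard + 1 ≤ Nat.card X :=
  hp.ncard_isCompRoot ▸ hp.ncard_isCompRoot_le htc

lemma IsPhylo.ncard_isRet_eq (hp : N.IsPhylo) (htc : N.TreeChild) (h : N.AtMostOneTreeChild) :
    {v | N.IsRet v}.ncard = Nat.card X - 1 := by
  have := hp.ncard_isCompRoot_le htc
  have := hp.card_le_ncard_isCompRoot h
  have := hp.ncard_isCompRoot
  omega

end Counting

end Net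

/-- `S` with each edge `t → c u` that is present subdivided by the new vertex `inr u`. -/
def subdivide {W : Type} (S : W → W → Prop) (t : W) (c : Bool → W) :
    W ⊕ Bool → W ⊕ Bool → Prop
  | .inl a, .inl b => S a b ∧ ¬ (a = t ∧ b ∈ range c)
  | .inl a, .inr u => a = t ∧ S t (c u)
  | .inr u, .inl b => b = c u ∧ S t b
  | .inr _, .inr _ => False

namespace subdivide

variable {W : Type} {S : W → W → Prop} {t : W} {c : Bool → W}

lemma mono {S' : W → W → Prop} (h : ∀ a b, S a b → S' a b) :
    ∀ p q, subdivide S t c p q → subdivide S' t c p q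
  | .inl _, .inl _, ⟨hab, hn⟩ => ⟨h _ _ hab, hn⟩
  | .inl _, .inr _, ⟨ha, hS⟩ => ⟨ha, h _ _ hS⟩
  | .inr _, .inl _, ⟨hb, hS⟩ => ⟨hb, h _ _ hS⟩

lemma rel_of_inr_left {u : Bool} {q : W ⊕ Bool} (h : subdivide S t c (.inr u) q) :
    S t (c u) := by
  cases q with
  | inl b => exact h.1 ▸ h.2
  | inr _ => exact h.elim

lemma rel_of_inr_right {u : Bool} {p : W ⊕ Bool} (h : subdivide S t c p (.inr u)) :
    S t (c u) := by
  cases p with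
  | inl a => exact h.2
  | inr _ => exact h.elim

/-- `Sum.elim id c` sends every new out-neighbour to the end of the edge it subdivides. -/
lemma image_out (a : W) : Sum.elim id c '' {q | subdivide S t c (.inl a) q} = {b | S a b} := by
  ext b
  constructor
  · rintro ⟨q | u, hq, rfl⟩
    · exact hq.1
    · exact hq.1 ▸ hq.2
  · intro hab
    by_cases h : a = t ∧ b ∈ range c
    · obtain ⟨rfl, u, rfl⟩ := h
      exact ⟨.inr u, ⟨rfl, hab⟩, rfl⟩
    · exact ⟨.inl b, ⟨hab, h⟩, rfl⟩

lemma image_in (b : W) :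
    Sum.elim id (fun _ => t) '' {p | subdivide S t c p (.inl b)} = {a | S a b} := by
  ext a
  constructor
  · rintro ⟨p | u, hp, rfl⟩
    · exact hp.1
    · exact hp.1 ▸ hp.2
  · intro hab
    by_cases h : a = t ∧ b ∈ range c
    · obtain ⟨rfl, u, rfl⟩ := h
      exact ⟨.inr u, ⟨rfl, hab⟩, rfl⟩
    · exact ⟨.inl a, ⟨hab, h⟩, rfl⟩

lemma injOn_out (hc : Function.Injective c) (a : W) :
    InjOn (Sum.elim id c) {q | subdivide S t c (.inl a) q} := by
  rintro (b | u) hb (b' | u') hb' h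
  · exact congrArg _ h
  · exact absurd ⟨hb'.1, u', h.symm⟩ hb.2
  · exact absurd ⟨hb.1, u, h⟩ hb'.2
  · exact congrArg _ (hc h)

lemma injOn_in (hc : Function.Injective c) (b : W) :
    InjOn (Sum.elim id fun _ => t) {p | subdivide S t c p (.inl b)} := by
  rintro (a | u) ha (a' | u') ha' h
  · exact congrArg _ h
  · exact absurd ⟨h, u', ha'.1.symm⟩ ha.2
  · exact absurd ⟨h.symm, u, ha.1.symm⟩ ha'.2
  · exact congrArg _ (hc (ha.1.symm.trans ha'.1))

lemma out_inr {u : Bool} (h : S t (c u)) : {q | subdivide S t c (.inr u) q} = {.inl (c u)} := by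
  ext (b | _)
  · simp only [mem_ofPred_eq, subdivide, mem_singleton_iff, Sum.inl.injEq]
    exact ⟨And.left, fun hb => ⟨hb, hb ▸ h⟩⟩
  · simp [subdivide]

lemma in_inr {u : Bool} (h : S t (c u)) : {p | subdivide S t c p (.inr u)} = {.inl t} := by
  ext (a | _) <;> simp [subdivide, h]

lemma ncard_out (hc : Function.Injective c) (a : W) :
    {q | subdivide S t c (.inl a) q}.ncard = {b | S a b}.ncard := by
  rw [← (injOn_out hc a).ncard_image, image_out]

lemma ncard_in (hc : Function.Injective c) (b : W) :
    {p | subdivide S t c p (.inl b)}.ncard = {a | S a b}.ncard := by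
  rw [← (injOn_in hc b).ncard_image, image_in]

lemma reflTransGen_of_rel {P : W ⊕ Bool → Prop} (hP : ∀ u, P (.inr u)) {a b : W}
    (hab : S a b) (hb : P (.inl b)) :
    ReflTransGen (fun p q => subdivide S t c p q ∧ P q) (.inl a) (.inl b) := by
  by_cases h : a = t ∧ b ∈ range c
  · obtain ⟨rfl, u, rfl⟩ := h
    have hin : subdivide S a c (.inl a) (.inr u) := ⟨rfl, hab⟩
    have hout : subdivide S a c (.inr u) (.inl (c u)) := ⟨rfl, hab⟩
    exact .tail (.single ⟨hin, hP u⟩) ⟨hout, hb⟩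
  · exact .single ⟨⟨hab, h⟩, hb⟩

end subdivide

namespace Net

variable {V W X : Type}

noncomputable def ancestorCount (N : Net V X) (v : V) : ℕ := {u | TransGen N.E u v}.ncard

lemma Acyclic.ancestorCount_lt [Finite V] {N : Net V X} (hac : N.Acyclic) {v w : V}
    (h : N.E v w) : N.ancestorCount v < N.ancestorCount w :=
  ncard_lt_ncard ⟨fun _ hu => hu.tail h, fun hsub => hac v (hsub (.single h))⟩

lemma acyclic_of_strictMono {N : Net V X} (f : V → ℕ) (hf : ∀ a b, N.E a b → f a < f b) :
    N.Acyclic := by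
  intro v h
  have hlt := TransGen.lift f hf v v h
  rw [transGen_eq_self] at hlt
  exact lt_irrefl _ hlt

/-- The edges `t → c false` and `t → c true` are subdivided by the new vertices `inr false` and
`inr true`, which are joined by the new reticulate edge `inr false → inr true`. -/
def addRetEdge (M : Net W X) (t : W) (c : Bool → W) : Net (W ⊕ Bool) X where
  E p q := subdivide M.E t c p q ∨ (p = .inr false ∧ q = .inr true)
  root := .inl M.root
  leaf x := .inl (M.leaf x)

section AddRetEdge

variable {M : Net W X} {t : W} {c : Bool → W}

lemma addRetEdge_E_inl_left (a : W) (q : W ⊕ Bool) :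
    (M.addRetEdge t c).E (.inl a) q ↔ subdivide M.E t c (.inl a) q := by
  simp [addRetEdge]

lemma addRetEdge_E_inl_right (p : W ⊕ Bool) (b : W) :
    (M.addRetEdge t c).E p (.inl b) ↔ subdivide M.E t c p (.inl b) := by
  simp [addRetEdge]

lemma outDeg_addRetEdge_inl (hc : Function.Injective c) (a : W) :
    (M.addRetEdge t c).outDeg (.inl a) = M.outDeg a := by
  simp only [outDeg, addRetEdge_E_inl_left]
  exact subdivide.ncard_out hc a

lemma inDeg_addRetEdge_inl (hc : Function.Injective c) (b : W) :
    (M.addRetEdge t c).inDeg (.inl b) = M.inDeg b := by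
  simp only [inDeg, addRetEdge_E_inl_right]
  exact subdivide.ncard_in hc b

lemma isLeaf_addRetEdge_inl (hc : Function.Injective c) (a : W) :
    (M.addRetEdge t c).IsLeaf (.inl a) ↔ M.IsLeaf a := by
  rw [IsLeaf, IsLeaf, outDeg_addRetEdge_inl hc]

lemma isTreeNode_addRetEdge_inl (hc : Function.Injective c) (a : W) :
    (M.addRetEdge t c).IsTreeNode (.inl a) ↔ M.IsTreeNode a := by
  rw [IsTreeNode, IsTreeNode, inDeg_addRetEdge_inl hc]

lemma isRet_addRetEdge_inl (hc : Function.Injective c) (a : W) :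
    (M.addRetEdge t c).IsRet (.inl a) ↔ M.IsRet a := by
  rw [IsRet, IsRet, inDeg_addRetEdge_inl hc]

variable (hE : ∀ u, M.E t (c u))
include hE

lemma outDeg_addRetEdge_inr_false : (M.addRetEdge t c).outDeg (.inr false) = 2 := by
  have : {q | (M.addRetEdge t c).E (.inr false) q} =
      insert (.inr true) {q | subdivide M.E t c (.inr false) q} := by
    ext q; simp [addRetEdge, or_comm]
  rw [outDeg, this, subdivide.out_inr (hE false), ncard_pair (by simp)]

lemma inDeg_addRetEdge_inr_false : (M.addRetEdge t c).inDeg (.inr false) = 1 := by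
  have : {p | (M.addRetEdge t c).E p (.inr false)} = {p | subdivide M.E t c p (.inr false)} := by
    ext p; simp [addRetEdge]
  rw [inDeg, this, subdivide.in_inr (hE false), ncard_singleton]

lemma outDeg_addRetEdge_inr_true : (M.addRetEdge t c).outDeg (.inr true) = 1 := by
  have : {q | (M.addRetEdge t c).E (.inr true) q} = {q | subdivide M.E t c (.inr true) q} := by
    ext q; simp [addRetEdge]
  rw [outDeg, this, subdivide.out_inr (hE true), ncard_singleton]

lemma inDeg_addRetEdge_inr_true : (M.addRetEdge t c).inDeg (.inr true) = 2 := by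
  have : {p | (M.addRetEdge t c).E p (.inr true)} =
      insert (.inr false) {p | subdivide M.E t c p (.inr true)} := by
    ext p; simp [addRetEdge, or_comm]
  rw [inDeg, this, subdivide.in_inr (hE true), ncard_pair (by simp)]

end AddRetEdge

end Net

namespace Net

variable {W X : Type} {M : Net W X} {t : W} {c : Bool → W}

/-- The new vertices are ranked just after `t`. -/
lemma Acyclic.addRetEdge [Finite W] (hac : M.Acyclic) : (M.addRetEdge t c).Acyclic := by
  refine acyclic_of_strictMono
    (Sum.elim (fun a => 3 * M.ancestorCount a) fun u => 3 * M.ancestorCount t + 1 + u.toNat) ?_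
  rintro (a | u) (b | w) (h | ⟨⟨⟩, ⟨⟩⟩) <;> simp only [Sum.elim_inl, Sum.elim_inr]
  · have := hac.ancestorCount_lt h.1
    omega
  · obtain ⟨rfl, -⟩ := h
    omega
  · have := hac.ancestorCount_lt h.2
    have := Bool.toNat_le u
    omega
  · exact h.elim
  · simp

lemma reflTransGen_addRetEdge_inl {a b : W} (h : ReflTransGen M.E a b) :
    ReflTransGen (M.addRetEdge t c).E (.inl a) (.inl b) :=
  ReflTransGen.lift' Sum.inl (fun _ _ hab =>
    ReflTransGen.mono (fun _ _ h => Or.inl h.1) _ _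
      (subdivide.reflTransGen_of_rel (P := fun _ => True) (fun _ => trivial) hab trivial)) _ _ h

variable (hc : Function.Injective c) (hE : ∀ u, M.E t (c u))
include hc hE

lemma IsPhylo.addRetEdge [Finite W] (hp : M.IsPhylo) : (M.addRetEdge t c).IsPhylo where
  acyclic := hp.acyclic.addRetEdge
  rootIn := (inDeg_addRetEdge_inl hc _).trans hp.rootIn
  reach := by
    rintro (a | u)
    · exact reflTransGen_addRetEdge_inl (hp.reach a)
    · exact (reflTransGen_addRetEdge_inl (hp.reach t)).tail (Or.inl ⟨rfl, hE u⟩)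
  leafInj := Sum.inl_injective.comp hp.leafInj
  leafIsLeaf x := (isLeaf_addRetEdge_inl hc _).mpr (hp.leafIsLeaf x)
  leafSurj := by
    rintro (v | (_ | _)) hv
    · obtain ⟨x, rfl⟩ := hp.leafSurj v ((isLeaf_addRetEdge_inl hc v).mp hv)
      exact ⟨x, rfl⟩
    · exact absurd hv (by rw [IsLeaf, outDeg_addRetEdge_inr_false hE]; omega)
    · exact absurd hv (by rw [IsLeaf, outDeg_addRetEdge_inr_true hE]; omega)
  leafIn x := (inDeg_addRetEdge_inl hc _).trans (hp.leafIn x)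

lemma IsBinaryNet.addRetEdge [Finite W] (hb : M.IsBinaryNet) : (M.addRetEdge t c).IsBinaryNet where
  toIsPhylo := hb.toIsPhylo.addRetEdge hc hE
  deg := by
    rintro (v | (_ | _)) hv
    · rw [inDeg_addRetEdge_inl hc, outDeg_addRetEdge_inl hc]
      exact hb.deg v ((isLeaf_addRetEdge_inl hc v).not.mp hv)
    · rw [inDeg_addRetEdge_inr_false hE, outDeg_addRetEdge_inr_false hE]
      omega
    · rw [inDeg_addRetEdge_inr_true hE, outDeg_addRetEdge_inr_true hE]
      omega

lemma ncard_isRet_addRetEdge [Finite W] :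
    {p | (M.addRetEdge t c).IsRet p}.ncard = {v | M.IsRet v}.ncard + 1 := by
  have : {p | (M.addRetEdge t c).IsRet p} = insert (.inr true) (Sum.inl '' {v | M.IsRet v}) := by
    ext (v | (_ | _))
    · simp [isRet_addRetEdge_inl hc]
    · simp [IsRet, inDeg_addRetEdge_inr_false hE]
    · simp [IsRet, inDeg_addRetEdge_inr_true hE]
  rw [this, ncard_insert_of_notMem (by simp), ncard_image_of_injective _ Sum.inl_injective]

omit hE in
lemma TreeChild.addRetEdge (htc : M.TreeChild) (hE : ∀ u, M.TreeEdge t (c u)) :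
    (M.addRetEdge t c).TreeChild := by
  rintro (v | u) hv
  · by_cases hvt : v = t
    · subst hvt
      exact ⟨.inr false, Or.inl ⟨rfl, (hE false).1⟩,
        (inDeg_addRetEdge_inr_false fun u => (hE u).1).le⟩
    · obtain ⟨w, hvw, hw⟩ := htc v ((isLeaf_addRetEdge_inl hc v).not.mp hv)
      exact ⟨.inl w, Or.inl ⟨hvw, fun h => hvt h.1⟩, (isTreeNode_addRetEdge_inl hc w).mpr hw⟩
  · exact ⟨.inl (c u), Or.inl ⟨rfl, (hE u).1⟩, (isTreeNode_addRetEdge_inl hc _).mpr (hE u).2⟩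

end Net

theorem Display.addRetEdge {VT W X : Type} {T : Net VT X} {M : Net W X} {t : W} {c : Bool → W}
    (hc : Function.Injective c) (hd : Display T M) : Display T (M.addRetEdge t c) := by
  obtain ⟨S, φ, hSE, hφ, hleaf, hpath, hdeg, hsupp⟩ := hd
  refine ⟨subdivide S t c, Sum.inl ∘ φ, fun p q h => Or.inl (subdivide.mono hSE p q h),
    Sum.inl_injective.comp hφ, fun x => congrArg Sum.inl (hleaf x), fun a b hab => ?_,
    fun a => ?_, ?_⟩
  · refine ReflTransGen.lift' Sum.inl (fun x y hxy => subdivide.reflTransGen_of_rel ?_ hxy.1 ?_)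
      _ _ (hpath a b hab)
    · exact fun u => Or.inr fun ⟨_, hu⟩ => Sum.inl_ne_inr hu
    · obtain h | h := hxy.2
      · exact Or.inl (congrArg Sum.inl h)
      · exact Or.inr fun ⟨z, hz⟩ => h ⟨z, Sum.inl_injective hz⟩
  · rw [Function.comp_apply, subdivide.ncard_out hc, subdivide.ncard_in hc]
    exact hdeg a
  · rintro (v | u) hv hedge
    · rw [subdivide.ncard_out hc, subdivide.ncard_in hc]
      refine hsupp v (fun ⟨a, ha⟩ => hv ⟨a, congrArg Sum.inl ha⟩) ?_
      obtain ⟨p, hp⟩ | ⟨q, hq⟩ := hedge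
      · exact Or.inl ⟨_, (subdivide.image_in v).subset ⟨p, hp, rfl⟩⟩
      · exact Or.inr ⟨_, (subdivide.image_out v).subset ⟨q, hq, rfl⟩⟩
    · have hS : S t (c u) := by
        obtain ⟨p, hp⟩ | ⟨q, hq⟩ := hedge
        exacts [subdivide.rel_of_inr_right hp, subdivide.rel_of_inr_left hq]
      rw [subdivide.out_inr hS, subdivide.in_inr hS]
      exact ⟨ncard_singleton _, ncard_singleton _⟩

namespace Net

variable {W X : Type}

lemma exists_fork_of_not_atMostOneTreeChild {M : Net W X} (h : ¬ M.AtMostOneTreeChild) :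
    ∃ (t : W) (c : Bool → W), Function.Injective c ∧ ∀ u, M.TreeEdge t (c u) := by
  simp only [AtMostOneTreeChild, not_forall, not_subsingleton_iff] at h
  obtain ⟨t, a, ha, b, hb, hab⟩ := h
  refine ⟨t, fun u => bif u then b else a, ?_, fun u => by cases u <;> assumption⟩
  intro u v huv
  cases u <;> cases v <;> first | rfl | exact absurd huv hab | exact absurd huv.symm hab

theorem exists_atMostOneTreeChild_displaying [Finite W] (M : Net W X) (hb : M.IsBinaryNet)
    (htc : M.TreeChild) :
    ∃ (W' : Type) (_ : Finite W') (M' : Net W' X), M'.IsBinaryNet ∧ M'.TreeChild ∧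
      M'.AtMostOneTreeChild ∧ ∀ {VT : Type} (T : Net VT X), Display T M → Display T M' := by
  induction hk : Nat.card X - {v | M.IsRet v}.ncard using Nat.strong_induction_on
    generalizing W with
  | _ k ih =>
  by_cases hone : M.AtMostOneTreeChild
  · exact ⟨W, inferInstance, M, hb, htc, hone, fun _ h => h⟩
  obtain ⟨t, c, hc, hE⟩ := exists_fork_of_not_atMostOneTreeChild hone
  have hb' := hb.addRetEdge hc fun u => (hE u).1
  have htc' := htc.addRetEdge hc hE
  have hlt : Nat.card X - {p | (M.addRetEdge t c).IsRet p}.ncard < k := by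
    have hle := hb'.ncard_isRet_add_one_le htc'
    rw [ncard_isRet_addRetEdge hc fun u => (hE u).1] at hle ⊢
    omega
  obtain ⟨W', _, M', hb'', htc'', hone', hdisp⟩ := ih _ hlt _ hb' htc' rfl
  exact ⟨W', inferInstance, M', hb'', htc'', hone', fun T h => hdisp T (h.addRetEdge hc)⟩

end Net

lemma Display.refl {V X : Type} (N : Net V X) : Display N N := by
  refine ⟨N.E, id, fun _ _ h => h, Function.injective_id, fun _ => rfl,
    fun _ _ h => .single ⟨h, Or.inl rfl⟩, fun _ => ⟨rfl, rfl⟩, ?_⟩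
  intro v hv
  exact absurd ⟨v, rfl⟩ hv

/-- Every binary tree-child network on an `n`-taxon set is displayed in some binary tree-child
network on the same taxa with exactly `n - 1` reticulate nodes, all of whose tree components
contain exactly one leaf (hence are paths). -/
theorem stmt_15 {V X : Type} [Fintype V] [Fintype X] (N : Net V X)
    (hN : N.IsBinaryNet) (htc : N.TreeChild) :
    ∃ (V' : Type) (_ : Fintype V') (N' : Net V' X),
      N'.IsBinaryNet ∧ N'.TreeChild ∧
      {v : V' | N'.IsRet v}.ncard = Fintype.card X - 1 ∧
      (∀ x : V', (x = N'.root ∨ N'.IsRet x) →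
        {v ∈ N'.comp x | N'.IsLeaf v}.ncard = 1) ∧
      Display N N' := by
  obtain ⟨W, _, M, hb, htcM, hone, hdisp⟩ := N.exists_atMostOneTreeChild_displaying hN htc
  refine ⟨W, Fintype.ofFinite W, M, hb, htcM, ?_, fun x _ => ?_, hdisp N (Display.refl N)⟩
  · rw [← Nat.card_eq_fintype_card]
    exact hb.ncard_isRet_eq htcM hone
  · exact Net.ncard_isLeaf_mem_comp hb.acyclic htcM hone x
end

section
/- If a set 𝒯 of binary phylogenetic trees on an n-taxon set X is co-displayed in a binary tree-child network, then for every subset X' ⊆ X with |X'| ≥ 2, the number of distinct cherries occurring in trees of 𝒯 whose both taxa lie in X' is at most 2|X'|−3. -/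
/-!
In a tree-child network every vertex has a path of tree edges down to a leaf and a tree node has
a single parent, so a displayed tree uses every tree edge below its root. Hence a cherry `{a, b}`
of a displayed tree comes from a vertex with two children from which `a` and `b` are reached
along *pass edges*: edges `u → w` such that `u` or the other child of `u` is a reticulation.
Pass edges form disjoint chains ending at leaves, so every taxon `x` has a topmost vertex
`top x` on its chain. Rank taxa by the height of `top x`. If `a` is a cherry partner of `b` of
no larger rank, then `a` hangs below a sibling of `top b`; as `top b` has at most two parents,
`b` has at most two such partners. A graph in which every vertex has at most two neighbours of
no larger rank has at most `2n - 3` edges on any `n ≥ 2` vertices.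
-/

open Relation

theorem Finite.wellFounded_of_not_transGen_self {α : Type*} [Finite α] {r : α → α → Prop}
    (hr : ∀ a, ¬ TransGen r a a) : WellFounded r :=
  have : IsTrans α (TransGen r) := ⟨fun _ _ _ => TransGen.trans⟩
  have : Std.Irrefl (TransGen r) := ⟨hr⟩
  Subrelation.wf TransGen.single (Finite.wellFounded_of_trans_of_irrefl _)

section EdgeCount

variable {X α : Type*} [LinearOrder α] (K : X → α) (E : Set (Sym2 X))

theorem edges_subset_union_image_of_isMax [DecidableEq X] {s : Finset X} {m : X}
    (hm : ∀ a ∈ s, K a ≤ K m) :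
    {p ∈ E | ∀ x ∈ p, x ∈ s} ⊆ {p ∈ E | ∀ x ∈ p, x ∈ s.erase m} ∪
      (fun a => s(a, m)) '' {a | s(a, m) ∈ E ∧ K a ≤ K m} := by
  rintro p ⟨hpE, hps⟩
  by_cases hmp : m ∈ p
  · obtain ⟨a, rfl⟩ := Sym2.mem_iff_exists.1 hmp
    rw [Sym2.eq_swap] at hpE hps ⊢
    exact Or.inr ⟨a, ⟨hpE, hm a (hps a (Sym2.mem_mk_left a m))⟩, rfl⟩
  · refine Or.inl ⟨hpE, fun x hx => Finset.mem_erase.2 ⟨?_, hps x hx⟩⟩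
    exact fun h => hmp (h ▸ hx)

theorem ncard_edges_of_card_eq_two (hE : ∀ p ∈ E, ¬ p.IsDiag) {s : Finset X}
    (hs : s.card = 2) : {p ∈ E | ∀ x ∈ p, x ∈ s}.ncard ≤ 1 := by
  classical
  obtain ⟨a, b, hab, rfl⟩ := Finset.card_eq_two.1 hs
  refine (Set.ncard_le_ncard (t := {s(a, b)}) ?_).trans (Set.ncard_singleton _).le
  rintro p ⟨hpE, hps⟩
  induction p using Sym2.ind with
  | _ c d =>
  have hcd : c ≠ d := fun h => hE _ hpE (h ▸ Sym2.mk_isDiag_iff.2 rfl)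
  have hc : c = a ∨ c = b := by simpa using hps c (Sym2.mem_mk_left c d)
  have hd : d = a ∨ d = b := by simpa using hps d (Sym2.mem_mk_right c d)
  rcases hc with rfl | rfl <;> rcases hd with rfl | rfl
  exacts [absurd rfl hcd, rfl, Sym2.eq_swap, absurd rfl hcd]

theorem ncard_edges_le_two_mul_sub_three [Finite X] (hE : ∀ p ∈ E, ¬ p.IsDiag)
    (hlow : ∀ b, {a | s(a, b) ∈ E ∧ K a ≤ K b}.ncard ≤ 2) (s : Finset X)
    (hs : 2 ≤ s.card) :
    {p ∈ E | ∀ x ∈ p, x ∈ s}.ncard ≤ 2 * s.card - 3 := by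
  classical
  obtain ⟨n, hn⟩ := Nat.exists_eq_add_of_le' hs
  induction n generalizing s with
  | zero => simpa [hn] using ncard_edges_of_card_eq_two E hE hn
  | succ n ih =>
    obtain ⟨m, hms, hm⟩ := s.exists_max_image K (Finset.card_pos.1 (by omega))
    have herase : (s.erase m).card = n + 2 := by rw [Finset.card_erase_of_mem hms, hn]; rfl
    calc {p ∈ E | ∀ x ∈ p, x ∈ s}.ncard
        ≤ {p ∈ E | ∀ x ∈ p, x ∈ s.erase m}.ncard +
            ((fun a => s(a, m)) '' {a | s(a, m) ∈ E ∧ K a ≤ K m}).ncard :=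
          (Set.ncard_le_ncard (edges_subset_union_image_of_isMax K E hm)).trans
            (Set.ncard_union_le _ _)
      _ ≤ (2 * (s.erase m).card - 3) + 2 :=
          add_le_add (ih _ (by omega) herase)
            ((Set.ncard_image_le (Set.toFinite _)).trans (hlow m))
      _ = 2 * s.card - 3 := by omega

end EdgeCount

namespace Net

variable {V X : Type} {N : Net V X}

namespace IsBinaryNet

theorem not_isRet_of_isLeaf (hN : N.IsBinaryNet) {v : V} (hv : N.IsLeaf v) : ¬ N.IsRet v := by
  obtain ⟨x, rfl⟩ := hN.leafSurj v hv
  have := hN.leafIn x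
  unfold IsRet
  omega

theorem inDeg_le_two (hN : N.IsBinaryNet) (v : V) : N.inDeg v ≤ 2 := by
  by_cases hv : N.IsLeaf v
  · obtain ⟨x, rfl⟩ := hN.leafSurj v hv
    have := hN.leafIn x
    omega
  · rcases hN.deg v hv with ⟨h, -⟩ | ⟨h, -⟩ <;> omega

theorem outDeg_le_two (hN : N.IsBinaryNet) (v : V) : N.outDeg v ≤ 2 := by
  by_cases hv : N.IsLeaf v
  · exact hv.le.trans zero_le_two
  · rcases hN.deg v hv with ⟨-, h⟩ | ⟨-, h⟩ <;> omega

theorem outDeg_eq_one (hN : N.IsBinaryNet) {v : V} (hv : N.IsRet v) : N.outDeg v = 1 := by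
  rcases hN.deg v fun hl => hN.not_isRet_of_isLeaf hl hv with ⟨h, -⟩ | ⟨-, h⟩
  · exact absurd hv (by unfold IsRet; omega)
  · exact h

theorem outDeg_eq_two (hN : N.IsBinaryNet) {v : V} (hv : ¬ N.IsRet v) (hl : ¬ N.IsLeaf v) :
    N.outDeg v = 2 := by
  rcases hN.deg v hl with ⟨-, h⟩ | ⟨h, -⟩
  · exact h
  · exact absurd (by unfold IsRet; omega) hv

end IsBinaryNet

/-- The edges along which a tree displayed in a tree-child network can pass through `u`
without branching at `u`: `u` is a reticulation, or its other child is one. -/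
def PassEdge (N : Net V X) (u w : V) : Prop :=
  N.E u w ∧ (N.IsRet u ∨ ∃ d, N.E u d ∧ d ≠ w ∧ N.IsRet d)

def IsPassTop (N : Net V X) (t : V) : Prop := ∀ u, ¬ N.PassEdge u t

/-- The trace in `N` of a cherry `{a, b}` of a displayed tree. -/
def PassCherry (N : Net V X) (a b : X) : Prop :=
  ∃ v c₁ c₂, N.E v c₁ ∧ N.E v c₂ ∧ c₁ ≠ c₂ ∧
    ReflTransGen N.PassEdge c₁ (N.leaf a) ∧ ReflTransGen N.PassEdge c₂ (N.leaf b)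

theorem PassCherry.symm {a b : X} (h : N.PassCherry a b) : N.PassCherry b a :=
  let ⟨v, c₁, c₂, h₁, h₂, hne, ha, hb⟩ := h
  ⟨v, c₂, c₁, h₂, h₁, hne.symm, hb, ha⟩

section

variable [Finite V]

theorem not_E_of_isLeaf {v w : V} (hv : N.IsLeaf v) : ¬ N.E v w := by
  have hempty : {w | N.E v w} = ∅ := (Set.ncard_eq_zero (Set.toFinite _)).1 hv
  exact fun h => (hempty ▸ h : w ∈ (∅ : Set V))

theorem eq_of_E_of_inDeg_le_one {u u' v : V} (hv : N.inDeg v ≤ 1) (hu : N.E u v)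
    (hu' : N.E u' v) : u = u' :=
  (Set.ncard_le_one (Set.toFinite _)).1 hv u hu u' hu'

theorem eq_of_E_of_outDeg_le_one {v w w' : V} (hv : N.outDeg v ≤ 1) (hw : N.E v w)
    (hw' : N.E v w') : w = w' :=
  (Set.ncard_le_one (Set.toFinite _)).1 hv w hw w' hw'

theorem Acyclic.wellFounded (hac : N.Acyclic) : WellFounded N.E :=
  Finite.wellFounded_of_not_transGen_self hac

theorem Acyclic.wellFounded_swap (hac : N.Acyclic) : WellFounded (Function.swap N.E) :=
  Finite.wellFounded_of_not_transGen_self fun v h => hac v (transGen_swap.1 h)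

noncomputable def height (N : Net V X) (v : V) : ℕ := {u | TransGen N.E u v}.ncard

theorem height_lt_height (hac : N.Acyclic) {u v : V} (h : N.E u v) :
    N.height u < N.height v :=
  Set.ncard_lt_ncard ⟨fun _ hw => hw.tail h, fun hsub => hac u (hsub (TransGen.single h))⟩

theorem IsBinaryNet.not_isRet_of_E_of_E (hN : N.IsBinaryNet) {v c₁ c₂ : V} (h₁ : N.E v c₁)
    (h₂ : N.E v c₂) (hne : c₁ ≠ c₂) : ¬ N.IsRet v :=
  fun hv => hne (eq_of_E_of_outDeg_le_one (hN.outDeg_eq_one hv).le h₁ h₂)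

theorem IsBinaryNet.eq_or_eq_of_E (hN : N.IsBinaryNet) {v c₁ c₂ d : V} (h₁ : N.E v c₁)
    (h₂ : N.E v c₂) (hne : c₁ ≠ c₂) (hd : N.E v d) : d = c₁ ∨ d = c₂ := by
  have hsub : ({c₁, c₂} : Set V) ⊆ {w | N.E v w} := by
    rintro w (rfl | rfl)
    exacts [h₁, h₂]
  have heq := Set.eq_of_subset_of_ncard_le hsub
    (by rw [Set.ncard_pair hne]; exact hN.outDeg_le_two v)
  exact heq.symm.subset hd

theorem IsBinaryNet.exists_sibling (hN : N.IsBinaryNet) {v c : V} (h : N.E v c)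
    (hv : ¬ N.IsRet v) : ∃ d, N.E v d ∧ d ≠ c := by
  obtain ⟨a, b, hab, hset⟩ :=
    Set.ncard_eq_two.1 (hN.outDeg_eq_two hv fun hl => not_E_of_isLeaf hl h)
  have hmem : ∀ z ∈ ({a, b} : Set V), N.E v z := fun z hz => hset.symm.subset hz
  rcases (hset ▸ h : c ∈ ({a, b} : Set V)) with rfl | rfl
  · exact ⟨b, hmem b (by simp), hab.symm⟩
  · exact ⟨a, hmem a (by simp), hab⟩

theorem TreeChild.exists_child_not_isRet (htc : N.TreeChild) {v w : V} (h : N.E v w) :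
    ∃ c, N.E v c ∧ ¬ N.IsRet c := by
  obtain ⟨c, hc, hct⟩ := htc v fun hl => not_E_of_isLeaf hl h
  exact ⟨c, hc, by unfold IsTreeNode at hct; unfold IsRet; omega⟩

theorem IsLeaf.eq_of_passPath {z w : V} (hz : N.IsLeaf z) (h : ReflTransGen N.PassEdge z w) :
    z = w := by
  rcases h.cases_head with h | ⟨c, hc, -⟩
  · exact h
  · exact absurd hc.1 (not_E_of_isLeaf hz)

theorem not_isRet_of_passEdge (hN : N.IsBinaryNet) (htc : N.TreeChild) {w r : V}
    (h : N.PassEdge w r) : ¬ N.IsRet r := by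
  intro hr
  obtain ⟨hwr, hcase⟩ := h
  obtain ⟨c, hwc, hc⟩ := htc.exists_child_not_isRet hwr
  rcases hcase with hw | ⟨d, hwd, hdr, hd⟩
  · exact hc (eq_of_E_of_outDeg_le_one (hN.outDeg_eq_one hw).le hwc hwr ▸ hr)
  · rcases hN.eq_or_eq_of_E hwd hwr hdr hwc with rfl | rfl
    exacts [hc hd, hc hr]

theorem isPassTop_of_isRet (hN : N.IsBinaryNet) (htc : N.TreeChild) {r : V} (hr : N.IsRet r) :
    N.IsPassTop r :=
  fun _ h => not_isRet_of_passEdge hN htc h hr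

theorem passEdge_leftUnique (hN : N.IsBinaryNet) (htc : N.TreeChild) :
    Relator.LeftUnique N.PassEdge := by
  intro u u' w h h'
  have hw := not_isRet_of_passEdge hN htc h
  exact eq_of_E_of_inDeg_le_one (by unfold IsRet at hw; omega) h.1 h'.1

theorem passEdge_rightUnique (hN : N.IsBinaryNet) (htc : N.TreeChild) :
    Relator.RightUnique N.PassEdge := by
  intro u w w' ⟨hw, hu⟩ ⟨hw', hu'⟩
  by_contra hne
  have hnr := hN.not_isRet_of_E_of_E hw hw' hne
  -- each of `w`, `w'` would have to be the reticulate sibling of the other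
  have hsibling : ∀ {c c'}, N.E u c → N.E u c' → c ≠ c' →
      (∃ d, N.E u d ∧ d ≠ c ∧ N.IsRet d) → N.IsRet c' := by
    rintro c c' hc hc' hcc' ⟨d, hd, hdc, hdr⟩
    rcases hN.eq_or_eq_of_E hc hc' hcc' hd with rfl | rfl
    exacts [absurd rfl hdc, hdr]
  have hw'r := hsibling hw hw' hne (hu.resolve_left hnr)
  have hwr := hsibling hw' hw (Ne.symm hne) (hu'.resolve_left hnr)
  obtain ⟨c, huc, hc⟩ := htc.exists_child_not_isRet hw
  rcases hN.eq_or_eq_of_E hw hw' hne huc with rfl | rfl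
  exacts [hc hwr, hc hw'r]

theorem leaf_eq_of_passPath (hN : N.IsBinaryNet) (htc : N.TreeChild) {u : V} {x y : X}
    (hx : ReflTransGen N.PassEdge u (N.leaf x)) (hy : ReflTransGen N.PassEdge u (N.leaf y)) :
    x = y := by
  apply hN.leafInj
  rcases ReflTransGen.total_of_right_unique (passEdge_rightUnique hN htc) hx hy with h | h
  · exact (hN.leafIsLeaf x).eq_of_passPath h
  · exact ((hN.leafIsLeaf y).eq_of_passPath h).symm

theorem passPath_total (hN : N.IsBinaryNet) (htc : N.TreeChild) {u u' z : V}
    (h : ReflTransGen N.PassEdge u z) (h' : ReflTransGen N.PassEdge u' z) :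
    ReflTransGen N.PassEdge u u' ∨ ReflTransGen N.PassEdge u' u := by
  have hU : Relator.RightUnique (Function.swap N.PassEdge) :=
    fun _ _ _ hb hc => passEdge_leftUnique hN htc hb hc
  rcases ReflTransGen.total_of_right_unique hU (reflTransGen_swap.2 h)
    (reflTransGen_swap.2 h') with h | h
  · exact Or.inr (reflTransGen_swap.1 h)
  · exact Or.inl (reflTransGen_swap.1 h)

theorem IsPassTop.passPath (hN : N.IsBinaryNet) (htc : N.TreeChild) {t u z : V}
    (ht : N.IsPassTop t) (htz : ReflTransGen N.PassEdge t z)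
    (huz : ReflTransGen N.PassEdge u z) : ReflTransGen N.PassEdge t u := by
  rcases passPath_total hN htc htz huz with h | h
  · exact h
  · rcases h.cases_tail with rfl | ⟨w, -, hw⟩
    · rfl
    · exact absurd hw (ht w)

theorem IsPassTop.eq (hN : N.IsBinaryNet) (htc : N.TreeChild) {t t' z : V} (ht : N.IsPassTop t)
    (ht' : N.IsPassTop t') (htz : ReflTransGen N.PassEdge t z)
    (ht'z : ReflTransGen N.PassEdge t' z) : t = t' := by
  rcases (ht'.passPath hN htc ht'z htz).cases_tail with h | ⟨w, -, hw⟩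
  · exact h
  · exact absurd hw (ht w)

theorem exists_isPassTop (hac : N.Acyclic) (u : V) :
    ∃ t, N.IsPassTop t ∧ ReflTransGen N.PassEdge t u := by
  induction u using hac.wellFounded.induction with
  | _ u ih =>
  by_cases h : ∃ w, N.PassEdge w u
  · obtain ⟨w, hw⟩ := h
    obtain ⟨t, ht, htw⟩ := ih w hw.1
    exact ⟨t, ht, htw.tail hw⟩
  · exact ⟨u, fun w hw => h ⟨w, hw⟩, ReflTransGen.refl⟩

theorem ncard_leavesBelowSiblings_le_inDeg (hN : N.IsBinaryNet) (htc : N.TreeChild) (t : V) :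
    {a | ∃ v s, N.E v t ∧ N.E v s ∧ s ≠ t ∧ ReflTransGen N.PassEdge s (N.leaf a)}.ncard
      ≤ N.inDeg t := by
  have : Nonempty V := ⟨t⟩
  choose! v s hvt hvs hst hsa using fun a (ha : ∃ v s, N.E v t ∧ N.E v s ∧ s ≠ t ∧
    ReflTransGen N.PassEdge s (N.leaf a)) => ha
  refine Set.ncard_le_ncard_of_injOn v hvt ?_
  intro a ha a' ha' hv
  have hs : s a' = s a := by
    rcases hN.eq_or_eq_of_E (hvs a ha) (hvt a ha) (hst a ha) (hv ▸ hvs a' ha') with h | h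
    · exact h
    · exact absurd h (hst a' ha')
  exact leaf_eq_of_passPath hN htc (hsa a ha) (hs ▸ hsa a' ha')

section Rank

variable {α : Type*} [Preorder α] {rk : V → α} {top : X → V}

theorem top_eq_of_rank_le (hN : N.IsBinaryNet) (htc : N.TreeChild)
    (hrk : ∀ u v, N.E u v → rk u < rk v)
    (htop : ∀ x, N.IsPassTop (top x) ∧ ReflTransGen N.PassEdge (top x) (N.leaf x))
    {a b : X} {v c₁ c₂ : V} (h₁ : N.E v c₁) (h₂ : N.E v c₂) (hne : c₁ ≠ c₂)
    (ha : ReflTransGen N.PassEdge c₁ (N.leaf a)) (hb : ReflTransGen N.PassEdge c₂ (N.leaf b))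
    (hle : rk (top a) ≤ rk (top b)) : top b = c₂ := by
  have htop_eq : ∀ x c, N.IsPassTop c → ReflTransGen N.PassEdge c (N.leaf x) → top x = c :=
    fun x _ hc hcx => (htop x).1.eq hN htc hc (htop x).2 hcx
  by_cases hr₂ : N.IsRet c₂
  · exact htop_eq b c₂ (isPassTop_of_isRet hN htc hr₂) hb
  by_cases hr₁ : N.IsRet c₁
  · -- `top b` lies above `v`, strictly above `c₁ = top a`
    have hvb : ReflTransGen N.PassEdge v (N.leaf b) :=
      .head ⟨h₂, .inr ⟨c₁, h₁, hne, hr₁⟩⟩ hb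
    have hbv := (htop b).1.passPath hN htc (htop b).2 hvb
    have hrk_mono : ∀ {u w}, ReflTransGen N.PassEdge u w → rk u ≤ rk w := fun h => by
      induction h with
      | refl => exact le_rfl
      | tail _ hstep ih => exact ih.trans (hrk _ _ hstep.1).le
    have hta := htop_eq a c₁ (isPassTop_of_isRet hN htc hr₁) ha
    exact absurd (hle.trans_lt ((hrk_mono hbv).trans_lt (hta ▸ hrk _ _ h₁))) (lt_irrefl _)
  · refine htop_eq b c₂ (fun w hw => ?_) hb
    obtain rfl : w = v := eq_of_E_of_inDeg_le_one (by unfold IsRet at hr₂; omega) hw.1 h₂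
    rcases hw.2 with hv | ⟨d, hd, hdc₂, hdr⟩
    · exact hN.not_isRet_of_E_of_E h₁ h₂ hne hv
    · rcases hN.eq_or_eq_of_E h₁ h₂ hne hd with rfl | rfl
      exacts [hr₁ hdr, hdc₂ rfl]

theorem ncard_passCherry_le_two [Finite X] (hN : N.IsBinaryNet) (htc : N.TreeChild)
    (hrk : ∀ u v, N.E u v → rk u < rk v)
    (htop : ∀ x, N.IsPassTop (top x) ∧ ReflTransGen N.PassEdge (top x) (N.leaf x)) (b : X) :
    {a | N.PassCherry a b ∧ rk (top a) ≤ rk (top b)}.ncard ≤ 2 := by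
  refine (Set.ncard_le_ncard ?_ (Set.toFinite _)).trans
    ((ncard_leavesBelowSiblings_le_inDeg hN htc (top b)).trans (hN.inDeg_le_two _))
  rintro a ⟨⟨v, c₁, c₂, h₁, h₂, hne, ha, hb⟩, hle⟩
  obtain rfl := top_eq_of_rank_le hN htc hrk htop h₁ h₂ hne ha hb hle
  exact ⟨v, c₁, h₂, h₁, hne, ha⟩

end Rank

theorem exists_treeEdge_path_to_leaf (hN : N.IsPhylo) (htc : N.TreeChild) (d : V) :
    ∃ x, ReflTransGen N.TreeEdge d (N.leaf x) := by
  induction d using hN.acyclic.wellFounded_swap.induction with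
  | _ d ih =>
  by_cases hd : N.IsLeaf d
  · obtain ⟨x, rfl⟩ := hN.leafSurj d hd
    exact ⟨x, .refl⟩
  · obtain ⟨w, hdw, hw⟩ := htc d hd
    obtain ⟨x, hwx⟩ := ih w hdw
    exact ⟨x, .head ⟨hdw, hw⟩ hwx⟩

section Subgraph

variable {S : V → V → Prop}

theorem exists_parent_or_reach_of_treeEdge_path (hSE : ∀ u v, S u v → N.E u v) {d l : V}
    (hdl : ReflTransGen N.TreeEdge d l) {z : V} (hzl : ReflTransGen S z l) :
    (∃ u, S u d) ∨ ReflTransGen N.E d z := by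
  induction hdl generalizing z with
  | refl =>
    rcases hzl.cases_tail with rfl | ⟨c, -, hcd⟩
    exacts [.inr .refl, .inl ⟨c, hcd⟩]
  | @tail m l hdm hml ih =>
    rcases hzl.cases_tail with rfl | ⟨c, hzc, hcl⟩
    · exact .inr ((ReflTransGen.mono (p := N.E) (fun _ _ h => h.1) _ _ hdm).tail hml.1)
    · exact ih (eq_of_E_of_inDeg_le_one hml.2 (hSE _ _ hcl) hml.1 ▸ hzc)

variable {A : Set V} {ρ : V}

/-- Every vertex has a tree path down to a leaf and tree nodes have a single parent, so a
subgraph in which `ρ` reaches every leaf must use every tree edge below `ρ`. -/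
theorem rel_of_treeEdge (hN : N.IsPhylo) (htc : N.TreeChild) (hSE : ∀ u v, S u v → N.E u v)
    (hreach : ∀ x, ReflTransGen S ρ (N.leaf x)) {w d : V} (hρw : ReflTransGen N.E ρ w)
    (hwd : N.TreeEdge w d) : S w d := by
  obtain ⟨x, hdx⟩ := exists_treeEdge_path_to_leaf hN htc d
  rcases exists_parent_or_reach_of_treeEdge_path hSE hdx (hreach x) with ⟨u, hud⟩ | hdρ
  · exact eq_of_E_of_inDeg_le_one hwd.2 (hSE _ _ hud) hwd.1 ▸ hud
  · exact absurd (TransGen.head' hwd.1 (hdρ.trans hρw)) (hN.acyclic w)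

theorem passEdge_of_rel (hN : N.IsBinaryNet) (htc : N.TreeChild) (hSE : ∀ u v, S u v → N.E u v)
    (hreach : ∀ x, ReflTransGen S ρ (N.leaf x)) (hfun : ∀ v ∉ A, {w | S v w}.Subsingleton)
    {w c : V} (hw : w ∉ A) (hρw : ReflTransGen N.E ρ w) (hwc : S w c) : N.PassEdge w c := by
  refine ⟨hSE _ _ hwc, or_iff_not_imp_left.2 fun hr => ?_⟩
  obtain ⟨d, hwd, hdc⟩ := hN.exists_sibling (hSE _ _ hwc) hr
  refine ⟨d, hwd, hdc, by_contra fun hd => hdc (hfun w hw ?_ hwc)⟩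
  have hd : N.IsTreeNode d := by unfold IsRet at hd; unfold IsTreeNode; omega
  exact rel_of_treeEdge hN.toIsPhylo htc hSE hreach hρw ⟨hwd, hd⟩

theorem passPath_of_pathAvoid (hN : N.IsBinaryNet) (htc : N.TreeChild)
    (hSE : ∀ u v, S u v → N.E u v) (hreach : ∀ x, ReflTransGen S ρ (N.leaf x))
    (hfun : ∀ v ∉ A, {w | S v w}.Subsingleton) {c z : V} (hz : N.IsLeaf z)
    (h : pathAvoid S A c z) (hc : c = z ∨ c ∉ A) (hρc : ReflTransGen N.E ρ c) :
    ReflTransGen N.PassEdge c z := by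
  unfold pathAvoid at h
  induction h using ReflTransGen.head_induction_on with
  | refl => exact .refl
  | head hcw _ ih =>
    have hcA := hc.resolve_left (by rintro rfl; exact not_E_of_isLeaf hz (hSE _ _ hcw.1))
    exact .head (passEdge_of_rel hN htc hSE hreach hfun hcA hρc hcw.1)
      (ih hcw.2 (hρc.tail (hSE _ _ hcw.1)))

/-- Outside `A` the subgraph does not branch, so the first vertex of `A` that an `S`-path from
`c` can reach is the end of the `A`-avoiding path from `c`. -/
theorem eq_of_pathAvoid (hSE : ∀ u v, S u v → N.E u v)
    (hfun : ∀ v ∉ A, {w | S v w}.Subsingleton)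
    {c z z' : V} (hz : N.IsLeaf z) (h : pathAvoid S A c z) (hc : c = z ∨ c ∉ A)
    (hcz' : ReflTransGen S c z') (hz' : z' ∈ A) : z' = z := by
  unfold pathAvoid at h
  induction h using ReflTransGen.head_induction_on with
  | refl =>
    rcases hcz'.cases_head with h | ⟨w, hw, -⟩
    exacts [h.symm, absurd (hSE _ _ hw) (not_E_of_isLeaf hz)]
  | head hcw _ ih =>
    have hcA := hc.resolve_left (by rintro rfl; exact not_E_of_isLeaf hz (hSE _ _ hcw.1))
    rcases hcz'.cases_head with rfl | ⟨w', hw', hw'z'⟩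
    · exact absurd hz' hcA
    · exact ih hcw.2 (hfun _ hcA hw' hcw.1 ▸ hw'z')

end Subgraph

theorem passCherry_of_hasCherry {VT : Type} [Finite VT] {T : Net VT X} (hN : N.IsBinaryNet)
    (htc : N.TreeChild) (hT : T.IsBinaryTree) (hD : Display T N) {x y : X}
    (hxy : T.HasCherry x y) : N.PassCherry x y := by
  obtain ⟨hne, p, hpx, hpy⟩ := hxy
  obtain ⟨S, φ, hSE, hinj, hleaf, hpath, -, hsupp⟩ := hD
  have hfun : ∀ v ∉ Set.range φ, {w | S v w}.Subsingleton := fun v hv w hw w' hw' =>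
    (Set.ncard_le_one (Set.toFinite _)).1 (hsupp v hv (.inr ⟨w, hw⟩)).1.le w hw w' hw'
  have hS : ∀ {a b}, pathAvoid S (Set.range φ) a b → ReflTransGen S a b :=
    ReflTransGen.mono (fun _ _ h => h.1) _ _
  have hSpath : ∀ {s t}, ReflTransGen T.E s t → ReflTransGen S (φ s) (φ t) :=
    ReflTransGen.lift' φ (fun a b h => hS (hpath a b h)) _ _
  have hreach : ∀ z, ReflTransGen S (φ T.root) (N.leaf z) :=
    fun z => hleaf z ▸ hSpath (hT.1.reach _)
  have hρp : ReflTransGen N.E (φ T.root) (φ p) :=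
    ReflTransGen.mono (p := N.E) hSE _ _ (hSpath (hT.1.reach p))
  have hfirst : ∀ {z}, T.E p (T.leaf z) → ∃ c, S (φ p) c ∧
      (c = N.leaf z ∨ c ∉ Set.range φ) ∧ pathAvoid S (Set.range φ) c (N.leaf z) := by
    intro z hpz
    have h := hpath _ _ hpz
    rw [hleaf] at h
    rcases h.cases_head with heq | ⟨c, hc, hcz⟩
    · rw [← hleaf] at heq
      obtain rfl := hinj heq
      exact absurd hpz (not_E_of_isLeaf (hT.1.leafIsLeaf z))
    · exact ⟨c, hc.1, hc.2, hcz⟩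
  have hpass : ∀ {z c}, S (φ p) c → (c = N.leaf z ∨ c ∉ Set.range φ) →
      pathAvoid S (Set.range φ) c (N.leaf z) → ReflTransGen N.PassEdge c (N.leaf z) :=
    fun hpc hc hcz => passPath_of_pathAvoid hN htc hSE hreach hfun (hN.leafIsLeaf _) hcz hc
      (hρp.tail (hSE _ _ hpc))
  obtain ⟨c₁, hS₁, hc₁, hp₁⟩ := hfirst hpx
  obtain ⟨c₂, hS₂, hc₂, hp₂⟩ := hfirst hpy
  refine ⟨φ p, c₁, c₂, hSE _ _ hS₁, hSE _ _ hS₂, ?_, hpass hS₁ hc₁ hp₁,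
    hpass hS₂ hc₂ hp₂⟩
  rintro rfl
  have hyx :=
    eq_of_pathAvoid hSE hfun (hN.leafIsLeaf x) hp₁ hc₁ (hS hp₂) ⟨T.leaf y, hleaf y⟩
  exact hne (hN.leafInj hyx).symm

end

end Net

/-- If a set of binary trees on a taxon set `X` is co-displayed in a binary tree-child network,
then for every subset `X' ⊆ X` with `|X'| ≥ 2`, the number of distinct cherries of the trees
with both taxa in `X'` is at most `2|X'| - 3`. -/
theorem stmt_16 {V X : Type} [Fintype V] [Fintype X] (N : Net V X)
    (hN : N.IsBinaryNet) (htc : N.TreeChild)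
    (ι : Type) (VT : ι → Type) (Ts : ∀ i, Net (VT i) X)
    (hfin : ∀ i, Finite (VT i)) (htree : ∀ i, (Ts i).IsBinaryTree)
    (hdisp : ∀ i, Display (Ts i) N) :
    ∀ X' : Finset X, 2 ≤ X'.card →
      {p : Sym2 X | (∃ i, p ∈ Net.cherries (Ts i)) ∧ ∀ x ∈ p, x ∈ X'}.ncard
        ≤ 2 * X'.card - 3 := by
  intro X' hX'
  choose top htop using fun x => Net.exists_isPassTop hN.acyclic (N.leaf x)
  have hpass : ∀ i a b, s(a, b) ∈ (Ts i).cherries → N.PassCherry a b := by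
    rintro i a b ⟨x, y, hab, hxy⟩
    have := hfin i
    have hc := Net.passCherry_of_hasCherry hN htc (htree i) (hdisp i) hxy
    rcases Sym2.eq_iff.1 hab with ⟨rfl, rfl⟩ | ⟨rfl, rfl⟩
    exacts [hc, hc.symm]
  refine ncard_edges_le_two_mul_sub_three (fun a => N.height (top a)) _ ?_ ?_ X' hX'
  · rintro _ ⟨i, a, b, rfl, hab, -⟩
    exact Sym2.mk_isDiag_iff.not.2 hab
  · intro b
    refine (Set.ncard_le_ncard ?_ (Set.toFinite _)).trans
      (Net.ncard_passCherry_le_two hN htc (fun _ _ => Net.height_lt_height hN.acyclic) htop b)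
    rintro a ⟨⟨i, hab⟩, hle⟩
    exact ⟨hpass i a b hab, hle⟩
end
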